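/- Under the standing hypotheses, choose for every r ∈ P elements e_1^r, …, e_{b_r}^r ∈ M_r whose cosets modulo D_r form an R-basis of M_r/D_r. Then the union B = ⋃_{r ∈ P} { e_1^r, …, e_{b_r}^r } is an R[U₀]-basis of M: every element of M is uniquely a finite R[U₀]-linear combination of elements of B. In particular, M is graded free. -/

import Mathlib

open scoped DirectSum

variable (P : Type) [AddCommGroup P] [Lattice P]
  [CovariantClass P P (· + ·) (· ≤ ·)] [DecidableEq P]
variable (R : Type) [CommRing R]

/-- The monoid algebra `R[U₀]` on the submonoid `U₀` of nonnegative elements of `P`. -/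
abbrev PersAlg : Type := AddMonoidAlgebra R ↥(AddSubmonoid.nonneg P)

/-- The monomial `t^p ∈ R[U₀]` for `p ≥ 0` (and `0` otherwise, a junk value). -/
noncomputable def tp (p : P) : PersAlg P R :=
  letI := Classical.dec (0 ≤ p)
  if h : 0 ≤ p then AddMonoidAlgebra.single (⟨p, h⟩ : ↥(AddSubmonoid.nonneg P)) 1 else 0

/-- A `P`-graded `R[U₀]`-module (persistence module): an `R[U₀]`-module together with an
internal direct sum decomposition `M = ⊕_{a ∈ P} M_a` into `R`-submodules such that
`t^s • M_a ⊆ M_{a+s}` for all `s ≥ 0`. -/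
structure PersMod : Type 1 where
  carrier : Type
  [isAddCommGroup : AddCommGroup carrier]
  [isModuleR : Module R carrier]
  [isModule : Module (PersAlg P R) carrier]
  [isTower : IsScalarTower R (PersAlg P R) carrier]
  deg : P → Submodule R carrier
  isInternal : DirectSum.IsInternal deg
  tp_smul_mem : ∀ (s : P), 0 ≤ s → ∀ (a : P) (x : carrier),
    x ∈ deg a → tp P R s • x ∈ deg (a + s)

attribute [instance] PersMod.isAddCommGroup PersMod.isModuleR PersMod.isModule PersMod.isTower

/-- Scalar multiplication by a fixed element of `R[U₀]`, as an `R`-linear map. -/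
noncomputable def smulMapR (M : PersMod P R) (a : PersAlg P R) : M.carrier →ₗ[R] M.carrier :=
  (LinearMap.lsmul (PersAlg P R) M.carrier a).restrictScalars R

/-- `D_r ⊆ M_r`, the sum of the images of all `M_q`, `q < r`, under `t^{r-q}`. -/
noncomputable def Dsub (M : PersMod P R) (r : P) : Submodule R M.carrier :=
  ⨆ q : {q : P // q < r}, Submodule.map (smulMapR P R M (tp P R (r - q.1))) (M.deg q.1)

/-- `M` is graded free: it admits an `R[U₀]`-basis of homogeneous elements. -/
def IsGradedFree (M : PersMod P R) : Prop :=
  ∃ (Λ : Type) (d : Λ → P) (b : Module.Basis Λ (PersAlg P R) M.carrier),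
    ∀ η, b η ∈ M.deg (d η)

/-- `M` is graded projective: it is a graded direct summand of a graded free module. -/
def IsGradedProjective (M : PersMod P R) : Prop :=
  ∃ F : PersMod P R, IsGradedFree P R F ∧
    ∃ (ι : M.carrier →ₗ[PersAlg P R] F.carrier) (π : F.carrier →ₗ[PersAlg P R] M.carrier),
      (∀ (a : P), ∀ x ∈ M.deg a, ι x ∈ F.deg a) ∧
      (∀ (a : P), ∀ x ∈ F.deg a, π x ∈ M.deg a) ∧
      π.comp ι = LinearMap.id

/-- An `R[U₀]`-submodule `S` of a graded module `F` is graded if it is the sum of its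
homogeneous parts `S ∩ F_a`. -/
def IsGradedSubmodule (F : PersMod P R) (S : Submodule (PersAlg P R) F.carrier) : Prop :=
  S.restrictScalars R = ⨆ a : P, (S.restrictScalars R ⊓ F.deg a)

/-- For a graded submodule `S ⊆ F`, the submodule `D_r` of sums of images of the homogeneous
pieces `S ∩ F_q`, `q < r`, under `t^{r-q}`. -/
noncomputable def DsubOf (F : PersMod P R) (S : Submodule (PersAlg P R) F.carrier) (r : P) :
    Submodule R F.carrier :=
  ⨆ q : {q : P // q < r},
    Submodule.map (smulMapR P R F (tp P R (r - q.1))) (S.restrictScalars R ⊓ F.deg q.1)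

/-!
Realise `M` as a graded retract (`π ∘ ι = id`) of a graded free module `F` with a homogeneous
basis `(b_η)` of degrees `d_η`. In coordinates, `x ∈ F_r` iff every coordinate of `x` is an
`R`-multiple of `t^{r - d_η}`, and `x ∈ t^{r-c} F_c` iff moreover only basis vectors with
`d_η ≤ c` occur.

Independence: if `t^{r-q₀} w` with `w ∈ M_{q₀}` is a sum of elements of the `t^{r-q} M_q` with
`q₀ ≰ q`, apply `π ∘ (truncation to the basis vectors of degree ≤ q₀) ∘ ι`. It fixes `t^{r-q₀} w`
and sends each summand into `t^{r-(q₀ ⊓ q)} M_{q₀ ⊓ q}` with `q₀ ⊓ q < q₀`, so `w ∈ D_{q₀}` since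
`t^{r-q₀}` is injective on `M`. In a homogeneous relation among the `e`'s, the coefficients of a
maximal degree therefore combine to an element of `D_{q₀}`, hence vanish.

Spanning: the least `c` with `u ∈ t^{r-c} M_c` is the join of the degrees of the basis vectors
in the support of `ι u`. As `M_r` is finitely generated these joins form a finite set, and
well-founded induction over it, using `M_c ⊆ span B + D_c` at each step, gives `M_r ⊆ span B`.
-/

variable {P R}

section Monomial

omit [DecidableEq P]

instance : IsOrderedAddMonoid P where
  add_le_add_left _ _ h c := by simpa only [add_comm _ c] using CovariantClass.elim c h

theorem tp_of_nonneg {p : P} (hp : 0 ≤ p) : tp P R p = AddMonoidAlgebra.single ⟨p, hp⟩ 1 :=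
  dif_pos hp

theorem tp_sub_of_not_le {q r : P} (h : ¬ q ≤ r) : tp P R (r - q) = 0 :=
  dif_neg (by rwa [sub_nonneg])

theorem tp_zero : tp P R (0 : P) = 1 :=
  tp_of_nonneg le_rfl

theorem tp_sub_mul_tp_sub {q c r : P} (hqc : q ≤ c) (hcr : c ≤ r) :
    tp P R (r - c) * tp P R (c - q) = tp P R (r - q) := by
  rw [tp_of_nonneg (sub_nonneg.2 hcr), tp_of_nonneg (sub_nonneg.2 hqc),
    tp_of_nonneg (sub_nonneg.2 (hqc.trans hcr)), AddMonoidAlgebra.single_mul_single, one_mul]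
  congr 1
  exact Subtype.ext (sub_add_sub_cancel r c q)

theorem isLeftRegular_tp {s : P} (hs : 0 ≤ s) : IsLeftRegular (tp P R s) := by
  intro x y h
  rw [tp_of_nonneg hs] at h
  ext g
  simpa using congr(($h).coeff (⟨s, hs⟩ + g))

open Classical in
noncomputable def coeffAt (a : PersAlg P R) (s : P) : R :=
  if h : 0 ≤ s then a.coeff ⟨s, h⟩ else 0

theorem coeffAt_zero (s : P) : coeffAt (0 : PersAlg P R) s = 0 := by
  simp [coeffAt]

theorem sum_coeff_smul_tp (a : PersAlg P R) :
    ∑ s ∈ a.coeff.support, a.coeff s • tp P R s = a := by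
  conv_rhs => rw [← a.sum_coeff_single]
  refine Finset.sum_congr rfl fun s _ => ?_
  rw [tp_of_nonneg s.2, AddMonoidAlgebra.smul_single, smul_eq_mul, mul_one]

end Monomial

section Graded

variable {N N' : PersMod P R}

noncomputable instance (N : PersMod P R) : DirectSum.Decomposition N.deg :=
  N.isInternal.chooseDecomposition

noncomputable def PersMod.proj (N : PersMod P R) (r : P) : N.carrier →ₗ[R] N.carrier :=
  (N.deg r).subtype ∘ₗ DFinsupp.lapply r ∘ₗ (DirectSum.decomposeLinearEquiv N.deg).toLinearMap

theorem PersMod.proj_of_mem {r : P} {x : N.carrier} (hx : x ∈ N.deg r) : N.proj r x = x :=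
  DirectSum.decompose_of_mem_same N.deg hx

theorem PersMod.proj_of_mem_of_ne {q r : P} {x : N.carrier} (hx : x ∈ N.deg q) (h : q ≠ r) :
    N.proj r x = 0 :=
  DirectSum.decompose_of_mem_ne N.deg hx h

theorem tp_sub_smul_mem {q : P} (r : P) {x : N.carrier} (hx : x ∈ N.deg q) :
    tp P R (r - q) • x ∈ N.deg r := by
  by_cases h : q ≤ r
  · simpa using N.tp_smul_mem (r - q) (sub_nonneg.2 h) q x hx
  · rw [tp_sub_of_not_le h, zero_smul]
    exact zero_mem _

theorem PersMod.proj_smul_of_mem (a : PersAlg P R) {q : P} (r : P) {x : N.carrier}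
    (hx : x ∈ N.deg q) : N.proj r (a • x) = coeffAt a (r - q) • tp P R (r - q) • x := by
  have hterm : ∀ s : AddSubmonoid.nonneg P,
      N.proj r (tp P R s • x) = if (s : P) = r - q then tp P R (r - q) • x else 0 := by
    intro s
    have hmem : tp P R s • x ∈ N.deg (q + s) := N.tp_smul_mem s s.2 q x hx
    split_ifs with hs
    · rw [hs] at hmem ⊢
      exact N.proj_of_mem (by simpa using hmem)
    · exact N.proj_of_mem_of_ne hmem fun h => hs (by rw [← h, add_sub_cancel_left])
  conv_lhs => rw [← sum_coeff_smul_tp a]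
  simp_rw [Finset.sum_smul, map_sum, smul_assoc, map_smul, hterm, smul_ite, smul_zero]
  by_cases h : 0 ≤ r - q
  · have hs : ∀ s : AddSubmonoid.nonneg P, (s : P) = r - q ↔ s = ⟨r - q, h⟩ :=
      fun s => by rw [Subtype.ext_iff]
    simp_rw [hs, Finset.sum_ite_eq', coeffAt, dif_pos h]
    split_ifs with hmem
    · rfl
    · rw [Finsupp.notMem_support_iff.1 hmem, zero_smul]
  · rw [tp_sub_of_not_le (mt sub_nonneg.2 h), zero_smul, smul_zero]
    exact Finset.sum_eq_zero fun s _ => if_neg fun hs : (s : P) = r - q => h (hs ▸ s.2)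

noncomputable def structMapRange (N : PersMod P R) (c r : P) : Submodule R N.carrier :=
  Submodule.map (smulMapR P R N (tp P R (r - c))) (N.deg c)

theorem tp_sub_smul_mem_structMapRange {c : P} (r : P) {y : N.carrier} (hy : y ∈ N.deg c) :
    tp P R (r - c) • y ∈ structMapRange N c r :=
  ⟨y, hy, rfl⟩

theorem structMapRange_le (c r : P) : structMapRange N c r ≤ N.deg r := by
  rintro _ ⟨y, hy, rfl⟩
  exact tp_sub_smul_mem r hy

theorem structMapRange_self (r : P) : structMapRange N r r = N.deg r := by
  rw [structMapRange, sub_self, tp_zero]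
  convert Submodule.map_id (N.deg r)
  ext x
  exact one_smul _ x

theorem map_structMapRange {q c r : P} (hqc : q ≤ c) (hcr : c ≤ r) :
    (structMapRange N q c).map (smulMapR P R N (tp P R (r - c))) = structMapRange N q r := by
  rw [structMapRange, structMapRange, ← Submodule.map_comp]
  congr 1
  ext x
  change tp P R (r - c) • tp P R (c - q) • x = tp P R (r - q) • x
  rw [smul_smul, tp_sub_mul_tp_sub hqc hcr]

theorem map_mem_structMapRange (f : N.carrier →ₗ[PersAlg P R] N'.carrier)
    (hf : ∀ a, ∀ x ∈ N.deg a, f x ∈ N'.deg a) {c r : P} {x : N.carrier}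
    (hx : x ∈ structMapRange N c r) : f x ∈ structMapRange N' c r := by
  obtain ⟨y, hy, rfl⟩ := hx
  exact ⟨f y, hf c y hy, (map_smul f _ y).symm⟩

theorem linearIndependent_of_homogeneous {ι : Type} {e : ι → N.carrier} {d : ι → P}
    (he : ∀ i, e i ∈ N.deg (d i))
    (h : ∀ (r : P) (c : ι →₀ R), (∀ i ∈ c.support, d i ≤ r) →
      Finsupp.linearCombination R (fun i => tp P R (r - d i) • e i) c = 0 → c = 0) :
    LinearIndependent (PersAlg P R) e := by
  rw [linearIndependent_iff]
  intro l hl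
  ext i s
  set r := d i + s
  let c : ι →₀ R := Finsupp.onFinset l.support (fun j => coeffAt (l j) (r - d j)) fun j hj => by
    by_contra hjl
    rw [Finsupp.notMem_support_iff.1 hjl, coeffAt_zero] at hj
    exact hj rfl
  have hc : ∀ j ∈ c.support, d j ≤ r := fun j hj => by
    by_contra hjr
    exact Finsupp.mem_support_iff.1 hj (by simp [c, coeffAt, sub_nonneg, hjr])
  have hrel : Finsupp.linearCombination R (fun j => tp P R (r - d j) • e j) c = N.proj r 0 := by
    simp only [← hl, Finsupp.linearCombination_apply, c]
    rw [Finsupp.onFinset_sum _ fun j => zero_smul R (tp P R (r - d j) • e j), Finsupp.sum, map_sum]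
    exact Finset.sum_congr rfl fun j _ => (N.proj_smul_of_mem (l j) r (he j)).symm
  have := congr($(h r c hc (hrel.trans (map_zero _))) i)
  have hs : (0 : P) ≤ s := s.2
  simpa [c, coeffAt, r, hs] using this

theorem structMapRange_le_of_forall_lt (L : Submodule (PersAlg P R) N.carrier) {c r : P}
    (hcr : c ≤ r) (hc : N.deg c ≤ L.restrictScalars R ⊔ Dsub P R N c)
    (h : ∀ q < c, structMapRange N q r ≤ L.restrictScalars R) :
    structMapRange N c r ≤ L.restrictScalars R := by
  rw [structMapRange, Submodule.map_le_iff_le_comap]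
  refine hc.trans (sup_le (fun x hx => L.smul_mem _ hx) ?_)
  rw [← Submodule.map_le_iff_le_comap, Dsub, Submodule.map_iSup]
  exact iSup_le fun q => (map_structMapRange q.2.le hcr).trans_le (h q q.2)

end Graded

section Free

variable {F : PersMod P R} {Λ : Type} {b : Module.Basis Λ (PersAlg P R) F.carrier} {dl : Λ → P}

theorem repr_proj (hb : ∀ η, b η ∈ F.deg (dl η)) (q : P) (x : F.carrier) (η : Λ) :
    b.repr (F.proj q x) η = coeffAt (b.repr x η) (q - dl η) • tp P R (q - dl η) := by
  classical
  conv_lhs => rw [← b.linearCombination_repr x]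
  rw [Finsupp.linearCombination_apply, Finsupp.sum, map_sum]
  simp_rw [F.proj_smul_of_mem _ q (hb _), ← smul_assoc, map_sum, map_smul, b.repr_self,
    Finsupp.smul_single, smul_eq_mul, mul_one, Finsupp.finsetSum_apply, Finsupp.single_apply,
    Finset.sum_ite_eq', Finsupp.mem_support_iff]
  split_ifs with h
  · rfl
  · rw [not_not.1 h, coeffAt_zero, zero_smul]

theorem mem_deg_iff_repr (hb : ∀ η, b η ∈ F.deg (dl η)) {q : P} {x : F.carrier} :
    x ∈ F.deg q ↔ ∀ η, ∃ κ : R, b.repr x η = κ • tp P R (q - dl η) := by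
  refine ⟨fun hx η => ⟨_, F.proj_of_mem hx ▸ repr_proj hb q x η⟩, fun h => ?_⟩
  choose κ hκ using h
  rw [← b.linearCombination_repr x, Finsupp.linearCombination_apply]
  refine Submodule.sum_mem _ fun η _ => ?_
  rw [hκ]
  change (κ η • tp P R (q - dl η)) • b η ∈ F.deg q
  rw [smul_assoc]
  exact Submodule.smul_mem _ _ (tp_sub_smul_mem q (hb η))

theorem mem_structMapRange_iff_repr (hb : ∀ η, b η ∈ F.deg (dl η)) {c r : P} (hcr : c ≤ r)
    {x : F.carrier} :
    x ∈ structMapRange F c r ↔ x ∈ F.deg r ∧ ∀ η, b.repr x η ≠ 0 → dl η ≤ c := by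
  constructor
  · intro hx
    refine ⟨structMapRange_le c r hx, fun η hη => ?_⟩
    obtain ⟨y, hy, rfl⟩ := hx
    obtain ⟨κ, hκ⟩ := (mem_deg_iff_repr hb).1 hy η
    by_contra hηc
    refine hη ?_
    change b.repr (tp P R (r - c) • y) η = 0
    rw [map_smul, Finsupp.smul_apply, hκ, tp_sub_of_not_le hηc, smul_zero, smul_zero]
  · rintro ⟨hx, hsupp⟩
    choose κ hκ using (mem_deg_iff_repr hb).1 hx
    refine ⟨∑ η ∈ (b.repr x).support, κ η • tp P R (c - dl η) • b η,
      Submodule.sum_mem _ fun η _ => Submodule.smul_mem _ _ (tp_sub_smul_mem c (hb η)), ?_⟩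
    change tp P R (r - c) • ∑ η ∈ (b.repr x).support, κ η • tp P R (c - dl η) • b η = x
    conv_rhs => rw [← b.linearCombination_repr x]
    rw [Finsupp.linearCombination_apply, Finsupp.sum, Finset.smul_sum]
    refine Finset.sum_congr rfl fun η hη => ?_
    rw [hκ, smul_comm, smul_smul, tp_sub_mul_tp_sub (hsupp η (Finsupp.mem_support_iff.1 hη)) hcr,
      smul_assoc]

open Classical in
variable (b dl) in
noncomputable def basisTrunc (c : P) : F.carrier →ₗ[PersAlg P R] F.carrier :=
  b.repr.symm.toLinearMap ∘ₗ (Finsupp.supported _ _ {η | dl η ≤ c}).subtype ∘ₗ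
    Finsupp.restrictDom _ _ {η | dl η ≤ c} ∘ₗ b.repr.toLinearMap

open Classical in
theorem repr_basisTrunc (c : P) (x : F.carrier) (η : Λ) :
    b.repr (basisTrunc b dl c x) η = if dl η ≤ c then b.repr x η else 0 := by
  simp [basisTrunc, Finsupp.restrictDom_apply, Finsupp.filter_apply]

theorem basisTrunc_mem_structMapRange (hb : ∀ η, b η ∈ F.deg (dl η)) (c : P) {q r : P}
    (hqr : q ≤ r) {x : F.carrier} (hx : x ∈ structMapRange F q r) :
    basisTrunc b dl c x ∈ structMapRange F (c ⊓ q) r := by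
  rw [mem_structMapRange_iff_repr hb hqr, mem_deg_iff_repr hb] at hx
  rw [mem_structMapRange_iff_repr hb (inf_le_right.trans hqr), mem_deg_iff_repr hb]
  refine ⟨fun η => ?_, fun η hη => ?_⟩ <;> rw [repr_basisTrunc] at * <;> split_ifs at * with hηc
  · exact hx.1 η
  · exact ⟨0, (zero_smul R _).symm⟩
  · exact le_inf hηc (hx.2 η hη)
  · exact absurd rfl hη

theorem basisTrunc_eq_self {c : P} {x : F.carrier} (hx : ∀ η, b.repr x η ≠ 0 → dl η ≤ c) :
    basisTrunc b dl c x = x := by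
  refine b.repr.injective (Finsupp.ext fun η => ?_)
  rw [repr_basisTrunc]
  split_ifs with hηc
  · rfl
  · exact (not_not.1 (mt (hx η) hηc)).symm

theorem tp_smul_injective_of_free [Module.Free (PersAlg P R) F.carrier] {s : P} (hs : 0 ≤ s) :
    Function.Injective (tp P R s • · : F.carrier → F.carrier) := by
  let b := Module.Free.chooseBasis (PersAlg P R) F.carrier
  intro x y h
  refine b.repr.injective (Finsupp.ext fun η => isLeftRegular_tp hs ?_)
  simpa using congr(b.repr $h η)

end Free

theorem exists_finset_support_subset {N : Type} [AddCommMonoid N] [Module R N] {Λ X : Type}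
    [AddCommMonoid X] [Module R X] (f : N →ₗ[R] Λ →₀ X) {S : Submodule R N} (hS : S.FG) :
    ∃ T : Finset Λ, ∀ x ∈ S, (f x).support ⊆ T := by
  classical
  obtain ⟨s, rfl⟩ := hS
  refine ⟨s.biUnion fun g => (f g).support, fun x hx => ?_⟩
  have hle : Submodule.span R (s : Set N) ≤
      (Finsupp.supported X R (s.biUnion fun g => (f g).support : Set Λ)).comap f :=
    Submodule.span_le.2 fun g hg => (Finsupp.mem_supported R _).2 <| by
      exact_mod_cast Finset.subset_biUnion_of_mem (fun g => (f g).support) hg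
  exact_mod_cast (Finsupp.mem_supported R _).1 (hle hx)

theorem le_span_sup_of_span_mkQ_eq {X : Type} [AddCommGroup X] [Module R X]
    {D N : Submodule R X} {ι : Type} {v : ι → X}
    (h : Submodule.span R (Set.range fun j => D.mkQ (v j)) = N.map D.mkQ) :
    N ≤ Submodule.span R (Set.range v) ⊔ D := by
  rw [sup_comm, ← Submodule.comap_map_mkQ, ← Submodule.map_le_iff_le_comap, ← h,
    Submodule.map_span, ← Set.range_comp]
  rfl

namespace IsGradedProjective

variable {M : PersMod P R} (hM : IsGradedProjective P R M)
include hM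

theorem tp_smul_injective {s : P} (hs : 0 ≤ s) :
    Function.Injective (tp P R s • · : M.carrier → M.carrier) := by
  obtain ⟨F, ⟨Λ, -, b, -⟩, ι, π, -, -, hπι⟩ := hM
  have := Module.Free.of_basis b
  have hι : Function.Injective ι :=
    Function.LeftInverse.injective (g := π) (LinearMap.congr_fun hπι)
  intro x y h
  exact hι (tp_smul_injective_of_free hs (by simpa using congr(ι $h)))

theorem mem_Dsub_of_tp_smul_mem_iSup {q₀ r : P} (hq₀r : q₀ ≤ r) {w : M.carrier}
    (hw : w ∈ M.deg q₀)
    (h : tp P R (r - q₀) • w ∈ ⨆ q : {q : P // q ≤ r ∧ ¬ q₀ ≤ q}, structMapRange M q r) :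
    w ∈ Dsub P R M q₀ := by
  have hinj := hM.tp_smul_injective (sub_nonneg.2 hq₀r)
  obtain ⟨F, ⟨Λ, dl, b, hb⟩, ι, π, hι, hπ, hπι⟩ := hM
  have hπι' : ∀ x, π (ι x) = x := LinearMap.congr_fun hπι
  let ρ : M.carrier →ₗ[R] M.carrier := (π ∘ₗ basisTrunc b dl q₀ ∘ₗ ι).restrictScalars R
  have hfix : ρ (tp P R (r - q₀) • w) = tp P R (r - q₀) • w := by
    have hιw := map_mem_structMapRange ι hι (tp_sub_smul_mem_structMapRange r hw)
    change π (basisTrunc b dl q₀ (ι _)) = _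
    rw [basisTrunc_eq_self ((mem_structMapRange_iff_repr hb hq₀r).1 hιw).2, hπι']
  have hρ : (⨆ q : {q : P // q ≤ r ∧ ¬ q₀ ≤ q}, structMapRange M q r).map ρ ≤
      (Dsub P R M q₀).map (smulMapR P R M (tp P R (r - q₀))) := by
    rw [Submodule.map_iSup, Dsub, Submodule.map_iSup]
    refine iSup_le fun ⟨q, hqr, hq₀q⟩ => ?_
    have hlt : q₀ ⊓ q < q₀ := inf_le_left.lt_of_ne fun h => hq₀q (inf_eq_left.1 h)
    rintro _ ⟨x, hx, rfl⟩
    have hρx : ρ x ∈ structMapRange M (q₀ ⊓ q) r := map_mem_structMapRange π hπ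
      (basisTrunc_mem_structMapRange hb q₀ hqr (map_mem_structMapRange ι hι hx))
    rw [← map_structMapRange hlt.le hq₀r] at hρx
    exact Submodule.mem_iSup_of_mem ⟨q₀ ⊓ q, hlt⟩ hρx
  obtain ⟨d, hd, hdw⟩ := hρ ⟨_, h, hfix⟩
  rwa [← hinj hdw]

theorem exists_finset_mem_structMapRange_of_ne_zero {r : P} (hFG : (M.deg r).FG) :
    ∃ J : Finset P, ∀ c ≤ r, ∀ u ∈ structMapRange M c r, u ≠ 0 →
      ∃ c' ∈ J, c' ≤ c ∧ u ∈ structMapRange M c' r := by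
  classical
  obtain ⟨F, ⟨Λ, dl, b, hb⟩, ι, π, hι, hπ, hπι⟩ := hM
  have hπι' : ∀ x, π (ι x) = x := LinearMap.congr_fun hπι
  obtain ⟨T, hT⟩ := exists_finset_support_subset ((b.repr.toLinearMap ∘ₗ ι).restrictScalars R) hFG
  refine ⟨T.powerset.image fun U => if h : U.Nonempty then U.sup' h dl else r,
    fun c hcr u hu hu0 => ?_⟩
  have hιu := (mem_structMapRange_iff_repr hb hcr).1 (map_mem_structMapRange ι hι hu)
  have hne : (b.repr (ι u)).support.Nonempty := by
    rw [Finsupp.support_nonempty_iff]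
    exact fun h => hu0 (by rw [← hπι' u, b.repr.map_eq_zero_iff.1 h, map_zero])
  set δ := (b.repr (ι u)).support.sup' hne dl
  have hδc : δ ≤ c := Finset.sup'_le _ _ fun η hη => hιu.2 η (Finsupp.mem_support_iff.1 hη)
  refine ⟨δ, Finset.mem_image.2 ⟨_, Finset.mem_powerset.2 (hT u (structMapRange_le c r hu)),
    dif_pos hne⟩, hδc, hπι' u ▸ map_mem_structMapRange π hπ ?_⟩
  exact (mem_structMapRange_iff_repr hb (hδc.trans hcr)).2
    ⟨hιu.1, fun η hη => Finset.le_sup' dl (Finsupp.mem_support_iff.2 hη)⟩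

theorem eq_zero_of_linearCombination_tp_smul_eq_zero {ι : Type} {e : ι → M.carrier} {d : ι → P}
    (he : ∀ i, e i ∈ M.deg (d i))
    (hli : ∀ r, LinearIndepOn R ((Dsub P R M r).mkQ ∘ e) {i | d i = r})
    {r : P} {c : ι →₀ R} (hcr : ∀ i ∈ c.support, d i ≤ r)
    (hc : Finsupp.linearCombination R (fun i => tp P R (r - d i) • e i) c = 0) : c = 0 := by
  classical
  by_contra hc0
  obtain ⟨q₀, hq₀⟩ := (c.support.image d).exists_maximal
    (Finset.image_nonempty.2 (Finsupp.support_nonempty_iff.2 hc0))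
  obtain ⟨i₀, hi₀, hdi₀⟩ := Finset.mem_image.1 hq₀.prop
  have hq₀r : q₀ ≤ r := hdi₀ ▸ hcr i₀ hi₀
  set c₀ := c.filter fun i => d i = q₀
  have hc₀ : c₀ ∈ Finsupp.supported R R {i | d i = q₀} := by
    intro i hi
    rw [Finset.mem_coe, Finsupp.support_filter, Finset.mem_filter] at hi
    exact hi.2
  have hsplit := Finsupp.filter_add_filter_not c fun i => d i = q₀
  rw [← hsplit, map_add, add_eq_zero_iff_eq_neg] at hc
  have h₀ : Finsupp.linearCombination R (fun i => tp P R (r - d i) • e i) c₀ =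
      tp P R (r - q₀) • Finsupp.linearCombination R e c₀ := by
    simp only [Finsupp.linearCombination_apply, Finsupp.sum, Finset.smul_sum]
    refine Finset.sum_congr rfl fun i hi => ?_
    rw [show d i = q₀ from hc₀ hi, smul_comm]
  have hD : Finsupp.linearCombination R e c₀ ∈ Dsub P R M q₀ := by
    refine hM.mem_Dsub_of_tp_smul_mem_iSup hq₀r ?_ ?_
    · rw [Finsupp.linearCombination_apply]
      exact Submodule.sum_mem _ fun i hi =>
        Submodule.smul_mem _ _ ((show d i = q₀ from hc₀ hi) ▸ he i)
    · rw [← h₀, hc, Finsupp.linearCombination_apply]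
      refine neg_mem (Submodule.sum_mem _ fun i hi => ?_)
      rw [Finsupp.support_filter, Finset.mem_filter] at hi
      have hq₀i : ¬ q₀ ≤ d i := fun h =>
        hi.2 (le_antisymm (hq₀.2 (Finset.mem_image_of_mem d hi.1) h) h)
      exact Submodule.mem_iSup_of_mem ⟨d i, hcr i hi.1, hq₀i⟩
        (Submodule.smul_mem _ _ (tp_sub_smul_mem_structMapRange r (he i)))
  have : c₀ = 0 := by
    refine linearIndepOn_iff.1 (hli q₀) c₀ hc₀ ?_
    rw [← Finsupp.apply_linearCombination, Submodule.mkQ_apply, Submodule.Quotient.mk_eq_zero]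
    exact hD
  exact Finsupp.mem_support_iff.1 hi₀ (by simpa [c₀, hdi₀] using congr($this i₀))

theorem eq_top_of_deg_le_sup_Dsub (hFG : ∀ r, (M.deg r).FG) (L : Submodule (PersAlg P R) M.carrier)
    (hL : ∀ r, M.deg r ≤ L.restrictScalars R ⊔ Dsub P R M r) : L = ⊤ := by
  have hdeg : ∀ r, M.deg r ≤ L.restrictScalars R := by
    intro r
    obtain ⟨J, hJ⟩ := hM.exists_finset_mem_structMapRange_of_ne_zero (hFG r)
    have hJL : ∀ c ∈ (J : Set P), c ≤ r → structMapRange M c r ≤ L.restrictScalars R := by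
      intro c hc
      refine (J.finite_toSet.wellFoundedOn (r := (· < ·))).induction hc
        (P := fun c => c ≤ r → structMapRange M c r ≤ L.restrictScalars R) fun c _ ih hcr => ?_
      refine structMapRange_le_of_forall_lt L hcr (hL c) fun q hqc u hu => ?_
      obtain rfl | hu0 := eq_or_ne u 0
      · exact zero_mem _
      obtain ⟨c', hc'J, hc'q, hu'⟩ := hJ q (hqc.le.trans hcr) u hu hu0
      exact ih c' hc'J (hc'q.trans_lt hqc) (hc'q.trans (hqc.le.trans hcr)) hu'
    intro u hu
    obtain rfl | hu0 := eq_or_ne u 0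
    · exact zero_mem _
    rw [← structMapRange_self] at hu
    obtain ⟨c', hc'J, hc'r, hu'⟩ := hJ r le_rfl u hu hu0
    exact hJL c' hc'J hc'r hu'
  rw [eq_top_iff, ← Submodule.restrictScalars_le R, Submodule.restrictScalars_top,
    ← M.isInternal.submodule_iSup_eq_top]
  exact iSup_le hdeg

end IsGradedProjective

theorem indecomposables_form_basis_general
    (M : PersMod P R) (hproj : IsGradedProjective P R M) (hFG : ∀ a : P, (M.deg a).FG)
    (n : P → ℕ) (e : (r : P) → Fin (n r) → M.carrier)
    (hdeg : ∀ r j, e r j ∈ M.deg r)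
    (hli : ∀ r, LinearIndependent R (fun j => (Dsub P R M r).mkQ (e r j)))
    (hspan : ∀ r, Submodule.span R (Set.range fun j => (Dsub P R M r).mkQ (e r j)) =
      Submodule.map (Dsub P R M r).mkQ (M.deg r)) :
    (LinearIndependent (PersAlg P R) (fun p : Σ r : P, Fin (n r) => e p.1 p.2) ∧
      Submodule.span (PersAlg P R) (Set.range (fun p : Σ r : P, Fin (n r) => e p.1 p.2)) = ⊤) ∧
    IsGradedFree P R M := by
  set E : (Σ r : P, Fin (n r)) → M.carrier := fun p => e p.1 p.2
  have hE : ∀ p, E p ∈ M.deg p.1 := fun p => hdeg p.1 p.2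
  have hliE : ∀ r, LinearIndepOn R ((Dsub P R M r).mkQ ∘ E) {p | p.1 = r} := fun r => by
    change LinearIndepOn R _ (Sigma.fst ⁻¹' {r})
    rw [← Set.range_sigmaMk, linearIndepOn_range_iff sigma_mk_injective]
    exact hli r
  have hspanE : ∀ r, M.deg r ≤
      (Submodule.span (PersAlg P R) (Set.range E)).restrictScalars R ⊔ Dsub P R M r := fun r =>
    have hEr : Set.range (e r) ⊆ Set.range E := Set.range_subset_iff.2 fun j => ⟨⟨r, j⟩, rfl⟩
    (le_span_sup_of_span_mkQ_eq (hspan r)).trans <| sup_le_sup_right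
      ((Submodule.span_mono hEr).trans (Submodule.span_le_restrictScalars R _ _)) _
  have hLI : LinearIndependent (PersAlg P R) E := linearIndependent_of_homogeneous hE
    fun r c hcr hc => hproj.eq_zero_of_linearCombination_tp_smul_eq_zero hE hliE hcr hc
  have hS := hproj.eq_top_of_deg_le_sup_Dsub hFG _ hspanE
  refine ⟨⟨hLI, hS⟩, _, Sigma.fst, Module.Basis.mk hLI hS.ge, fun p => ?_⟩
  rw [Module.Basis.mk_apply]
  exact hE p

theorem indecomposables_form_basis [IsDomain R] [IsPrincipalIdealRing R]
    (M : PersMod P R) (hproj : IsGradedProjective P R M) (hFG : ∀ a : P, (M.deg a).FG)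
    (n : P → ℕ) (e : (r : P) → Fin (n r) → M.carrier)
    (hdeg : ∀ r j, e r j ∈ M.deg r)
    (hli : ∀ r, LinearIndependent R (fun j => (Dsub P R M r).mkQ (e r j)))
    (hspan : ∀ r, Submodule.span R (Set.range fun j => (Dsub P R M r).mkQ (e r j)) =
      Submodule.map (Dsub P R M r).mkQ (M.deg r)) :
    (LinearIndependent (PersAlg P R) (fun p : Σ r : P, Fin (n r) => e p.1 p.2) ∧
      Submodule.span (PersAlg P R) (Set.range (fun p : Σ r : P, Fin (n r) => e p.1 p.2)) = ⊤) ∧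
    IsGradedFree P R M :=
  indecomposables_form_basis_general M hproj hFG n e hdeg hli hspan
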